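/- Let C be a commutative ring and λ ∈ C, and let U_λC denote the λ-umbral algebra. The shift operator P : U_λC → U_λC defined by P(u_n) = u_{n+1} (i.e., (P u)(0) = 0 and (P u)(n+1) = u(n)) is a Baxter operator of weight λ on U_λC, that is, P(u)·P(v) = P(u·P(v)) + P(v·P(u)) + λ·P(u·v) for all u, v ∈ U_λC. -/

import Mathlib

open Finset

/-- The multiplication of the `λ`-umbral algebra `U_λC` on sequences `ℕ → C`:
`(u·v)(j) = ∑_{m=0}^{j} ∑_{n=j−m}^{j} binom(j,n)·binom(n,m+n−j)·λ^{m+n−j}·u(m)·v(n)`. -/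
def umul {C : Type*} [CommRing C] (lam : C) (u v : ℕ → C) : ℕ → C :=
  fun j => ∑ m ∈ Finset.range (j + 1), ∑ n ∈ Finset.Icc (j - m) j,
    (j.choose n : C) * (n.choose (m + n - j) : C) * lam ^ (m + n - j) * u m * v n

/-- The shift operator `P(u_n) = u_{n+1}`: `(P u)(0) = 0` and `(P u)(n+1) = u(n)`. -/
def shiftP {C : Type*} [CommRing C] (u : ℕ → C) : ℕ → C :=
  fun j => match j with
  | 0 => 0
  | n + 1 => u n

/-!
The Baxter identity is bilinear in `u` and `v`, so it suffices to check it on basis vectors: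
`u_{a+1} u_{b+1} = P(u_a u_{b+1}) + P(u_{a+1} u_b) + λ P(u_a u_b)`. Comparing coefficients of
`u_{k+1}`, this is the rule `c(k+1, a+1, b+1) = c(k, a, b+1) + c(k, a+1, b) + λ c(k, a, b)` for the
structure constants `c`, which up to the power of `λ` are trinomial coefficients, so it is the
trinomial Pascal recursion.
-/

section

variable {C : Type*} [CommRing C]

lemma shiftP_zero (u : ℕ → C) : shiftP u 0 = 0 := rfl

lemma shiftP_succ (u : ℕ → C) (n : ℕ) : shiftP u (n + 1) = u n := rfl

/-- The structure constants `u_m · u_n = ∑ j, umulCoeff λ j m n · u_j`; for `max m n ≤ j ≤ m + n`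
they equal `j! / ((j-m)! (j-n)! (m+n-j)!) · λ^(m+n-j)`, and they vanish otherwise. -/
def umulCoeff (lam : C) (j m n : ℕ) : C :=
  if j ≤ m + n then (j.choose n : C) * (n.choose (m + n - j) : C) * lam ^ (m + n - j) else 0

lemma choose_mul_choose_comm {j m n : ℕ} (h : j ≤ m + n) :
    j.choose n * n.choose (m + n - j) = j.choose m * m.choose (m + n - j) := by
  rcases lt_or_ge j n with hn | hn
  · rw [Nat.choose_eq_zero_of_lt hn, Nat.choose_eq_zero_of_lt (by omega : m < m + n - j),
      zero_mul, mul_zero]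
  rcases lt_or_ge j m with hm | hm
  · rw [Nat.choose_eq_zero_of_lt hm, Nat.choose_eq_zero_of_lt (by omega : n < m + n - j),
      zero_mul, mul_zero]
  rw [Nat.choose_mul (by omega), Nat.choose_mul (by omega),
    Nat.choose_symm_of_eq_add (by omega : j - (m + n - j) = (n - (m + n - j)) + (m - (m + n - j)))]

lemma umulCoeff_comm (lam : C) (j m n : ℕ) : umulCoeff lam j m n = umulCoeff lam j n m := by
  unfold umulCoeff
  rw [add_comm n m]
  split_ifs with h
  · have hC := congrArg (Nat.cast : ℕ → C) (choose_mul_choose_comm h)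
    push_cast at hC
    rw [hC]
  · rfl

lemma umulCoeff_eq_zero_of_lt_right (lam : C) {j n : ℕ} (m : ℕ) (h : j < n) :
    umulCoeff lam j m n = 0 := by
  simp [umulCoeff, Nat.choose_eq_zero_of_lt h]

lemma umulCoeff_eq_zero_of_lt_left (lam : C) {j m : ℕ} (n : ℕ) (h : j < m) :
    umulCoeff lam j m n = 0 := by
  rw [umulCoeff_comm, umulCoeff_eq_zero_of_lt_right lam n h]

lemma umul_apply (lam : C) (u v : ℕ → C) (j : ℕ) :
    umul lam u v j = ∑ m ∈ range (j + 1), ∑ n ∈ range (j + 1),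
      umulCoeff lam j m n * u m * v n := by
  refine sum_congr rfl fun m _ => ?_
  have hIcc : Icc (j - m) j = (range (j + 1)).filter (fun n => j ≤ m + n) := by
    ext n
    simp only [mem_Icc, mem_filter, mem_range]
    omega
  rw [hIcc, sum_filter]
  refine sum_congr rfl fun n _ => ?_
  unfold umulCoeff
  split_ifs <;> simp

lemma umul_apply_eq_sum (lam : C) (u v : ℕ → C) {j M N : ℕ} (hM : j < M) (hN : j < N) :
    umul lam u v j = ∑ m ∈ range M, ∑ n ∈ range N, umulCoeff lam j m n * u m * v n := by
  rw [umul_apply]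
  refine sum_subset (range_subset_range.2 hM) (fun m _ hm => ?_) |>.trans
    (sum_congr rfl fun m _ => sum_subset (range_subset_range.2 hN) fun n _ hn => ?_)
  · simp [umulCoeff_eq_zero_of_lt_left lam _ (by simpa using hm : j < m)]
  · simp [umulCoeff_eq_zero_of_lt_right lam m (by simpa using hn : j < n)]

lemma umul_comm (lam : C) (u v : ℕ → C) : umul lam u v = umul lam v u := by
  funext j
  rw [umul_apply, umul_apply, sum_comm]
  refine sum_congr rfl fun m _ => sum_congr rfl fun n _ => ?_
  rw [umulCoeff_comm, mul_right_comm]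

lemma umul_shiftP_right_apply (lam : C) (u v : ℕ → C) (k : ℕ) :
    umul lam u (shiftP v) k = ∑ a ∈ range (k + 1), ∑ b ∈ range (k + 1),
      umulCoeff lam k a (b + 1) * u a * v b := by
  rw [umul_apply_eq_sum lam u _ (Nat.lt_succ_self k) (by omega : k < k + 2)]
  refine sum_congr rfl fun a _ => ?_
  rw [sum_range_succ']
  simp only [shiftP_succ, shiftP_zero, mul_zero, add_zero]

lemma umul_shiftP_left_apply (lam : C) (u v : ℕ → C) (k : ℕ) :
    umul lam (shiftP u) v k = ∑ a ∈ range (k + 1), ∑ b ∈ range (k + 1),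
      umulCoeff lam k (a + 1) b * u a * v b := by
  rw [umul_comm, umul_shiftP_right_apply, sum_comm]
  refine sum_congr rfl fun a _ => sum_congr rfl fun b _ => ?_
  rw [umulCoeff_comm, mul_right_comm]

lemma umul_shiftP_shiftP_zero (lam : C) (u v : ℕ → C) :
    umul lam (shiftP u) (shiftP v) 0 = 0 := by
  simp [umul_apply, shiftP_zero]

lemma umul_shiftP_shiftP_succ (lam : C) (u v : ℕ → C) (k : ℕ) :
    umul lam (shiftP u) (shiftP v) (k + 1) = ∑ a ∈ range (k + 1), ∑ b ∈ range (k + 1),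
      umulCoeff lam (k + 1) (a + 1) (b + 1) * u a * v b := by
  rw [umul_apply, sum_range_succ']
  simp only [shiftP_zero, mul_zero, zero_mul, sum_const_zero, add_zero]
  refine sum_congr rfl fun a _ => ?_
  rw [sum_range_succ']
  simp only [shiftP_succ, shiftP_zero, mul_zero, add_zero]

lemma umulCoeff_succ_succ_succ (lam : C) (k a b : ℕ) :
    umulCoeff lam (k + 1) (a + 1) (b + 1) =
      umulCoeff lam k a (b + 1) + umulCoeff lam k (a + 1) b + lam * umulCoeff lam k a b := by
  unfold umulCoeff
  rcases lt_trichotomy k (a + b + 1) with h | rfl | h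
  · obtain ⟨r, hr⟩ : ∃ r, a + b = k + r := ⟨a + b - k, by omega⟩
    rw [if_pos (by omega), if_pos (by omega), if_pos (by omega), if_pos (by omega),
      show a + 1 + (b + 1) - (k + 1) = r + 1 by omega, show a + (b + 1) - k = r + 1 by omega,
      show a + 1 + b - k = r + 1 by omega, show a + b - k = r by omega,
      Nat.choose_succ_succ' k b, Nat.choose_succ_succ' b r]
    push_cast
    ring
  · rw [if_pos (by omega), if_pos (by omega), if_pos (by omega), if_neg (by omega),
      show a + 1 + (b + 1) - (a + b + 1 + 1) = 0 by omega,
      show a + (b + 1) - (a + b + 1) = 0 by omega, show a + 1 + b - (a + b + 1) = 0 by omega,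
      Nat.choose_succ_succ' (a + b + 1) b, Nat.choose_zero_right, Nat.choose_zero_right]
    push_cast
    ring
  · rw [if_neg (by omega), if_neg (by omega), if_neg (by omega), if_neg (by omega)]
    ring

end

/-- The shift operator is a Baxter operator of weight `λ` on the `λ`-umbral algebra. -/
theorem shiftP_baxter {C : Type*} [CommRing C] (lam : C) (u v : ℕ → C) :
    umul lam (shiftP u) (shiftP v) =
      shiftP (umul lam u (shiftP v)) + shiftP (umul lam v (shiftP u)) +
        lam • shiftP (umul lam u v) := by
  funext j
  rcases j with _ | k
  · simp [umul_shiftP_shiftP_zero, shiftP_zero]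
  simp only [Pi.add_apply, Pi.smul_apply, smul_eq_mul, shiftP_succ]
  rw [umul_shiftP_shiftP_succ, umul_shiftP_right_apply, umul_comm lam v, umul_shiftP_left_apply,
    umul_apply, mul_sum, ← sum_add_distrib, ← sum_add_distrib]
  refine sum_congr rfl fun a _ => ?_
  rw [mul_sum, ← sum_add_distrib, ← sum_add_distrib]
  refine sum_congr rfl fun b _ => ?_
  rw [umulCoeff_succ_succ_succ]
  ring
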